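/- For the destructive-pairs q-measure μ(A) = ν(A) - 2ν({x ∈ A : x + 3/4 ∈ A}) on [0,1], and b ∈ [3/4, 1], the quantum integral ∫_0^b x dμ = (3/2)b - 9/16 - b²/2. -/

import Mathlib

/-! The set of destructive pairs inside `(λ, b]` is `(λ, b - 3/4]`, so the integrand is the
difference of two ramps, `max (b - λ) 0 - 2 max (b - 3/4 - λ) 0`, and a ramp vanishing at `c`
integrates over `λ > 0` to `c² / 2`. Hence the integral is `b² / 2 - (b - 3/4)²`. -/

open MeasureTheory Set

/-- The destructive-pairs q-measure on `[0,1]`: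
`μ(A) = ν(A) - 2 ν({x ∈ A : x + 3/4 ∈ A})` with `ν` Lebesgue measure. -/
noncomputable def destrMeas (A : Set ℝ) : ℝ :=
  (volume A).toReal - 2 * (volume {x | x ∈ A ∧ x + 3 / 4 ∈ A}).toReal

theorem destrMeas_Ioc (a b : ℝ) :
    destrMeas (Ioc a b) = max (b - a) 0 - 2 * max (b - 3 / 4 - a) 0 := by
  have hpairs : {x | x ∈ Ioc a b ∧ x + 3 / 4 ∈ Ioc a b} = Ioc a (b - 3 / 4) := by
    ext x
    simp only [mem_Ioc, mem_ofPred_eq]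
    constructor
    · rintro ⟨⟨hax, -⟩, -, hxb⟩
      exact ⟨hax, by linarith⟩
    · rintro ⟨hax, hxb⟩
      exact ⟨⟨hax, by linarith⟩, by linarith, by linarith⟩
  rw [destrMeas, hpairs, Real.volume_Ioc, Real.volume_Ioc,
    ENNReal.toReal_ofReal', ENNReal.toReal_ofReal']

theorem max_sub_eq_zero_of_mem_Ioi_sdiff_Ioc {a c x : ℝ} (hx : x ∈ Ioi a \ Ioc a c) :
    max (c - x) 0 = 0 := by
  simp only [mem_sdiff, mem_Ioi, mem_Ioc, not_and, not_le] at hx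
  exact max_eq_right (by linarith [hx.2 hx.1])

theorem integrableOn_Ioi_max_sub (a c : ℝ) :
    IntegrableOn (fun x : ℝ => max (c - x) 0) (Ioi a) :=
  (by fun_prop : Continuous fun x : ℝ => max (c - x) 0).integrableOn_Ioc.of_forall_sdiff_eq_zero
    measurableSet_Ioi fun _ => max_sub_eq_zero_of_mem_Ioi_sdiff_Ioc

theorem integral_Ioi_max_sub {a c : ℝ} (hac : a ≤ c) :
    ∫ x in Ioi a, max (c - x) 0 = (c - a) ^ 2 / 2 := by
  calc ∫ x in Ioi a, max (c - x) 0
      = ∫ x in Ioc a c, max (c - x) 0 :=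
        setIntegral_eq_of_subset_of_forall_sdiff_eq_zero measurableSet_Ioi Ioc_subset_Ioi_self
          fun _ => max_sub_eq_zero_of_mem_Ioi_sdiff_Ioc
    _ = ∫ x in Ioc a c, (c - x) :=
        setIntegral_congr_fun measurableSet_Ioc fun x hx => max_eq_left (by linarith [hx.2])
    _ = ∫ x in a..c, (c - x) := (intervalIntegral.integral_of_le hac).symm
    _ = (c - a) ^ 2 / 2 := by
        rw [intervalIntegral.integral_comp_sub_left (fun x => x), sub_self, integral_id]
        ring

theorem stmt_17 (b : ℝ) (hb : b ∈ Set.Icc (3 / 4 : ℝ) 1) :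
    (∫ lam in Set.Ioi (0 : ℝ), destrMeas (Set.Ioc lam b)) =
      (3 / 2) * b - 9 / 16 - b ^ 2 / 2 := by
  simp only [destrMeas_Ioc]
  rw [integral_sub (integrableOn_Ioi_max_sub 0 b) ((integrableOn_Ioi_max_sub 0 _).const_mul 2),
    integral_const_mul, integral_Ioi_max_sub (by linarith [hb.1]),
    integral_Ioi_max_sub (by linarith [hb.1])]
  ring
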